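/- arXiv:math-ph/0204032 — 2 statements merged into one kernel-verified Lean document; each statement's English description precedes it below -/
import Mathlib

section
/- Suppose ŵ : ℝ^d × ℝ^d → ℝ is continuous, ŵ(0,0) = 1, and along every solution (k_s, η_s) of k̇ = ω₀²η_s, η̇ = 2γη_s - k_s one has ŵ(k_s,η_s) = ŵ(k₀,η₀) exp(-∫₀^s ϑ_τ dτ) with ϑ_τ := D_pp|η_τ|² + D_qq|k_τ|² + 2D_pq k_τ·η_τ ≥ 0 not identically zero along nontrivial trajectories. If γ = 0 and ω₀ > 0 (so trajectories are periodic with period 2π/ω₀) and D_pp, D_qq > 0, then ŵ ≡ 0 on ℝ^{2d} \ {0}, contradicting integrability of a nontrivial steady state; i.e., evaluating at one period gives ŵ(k₀,η₀) = ŵ(k₀,η₀) exp(-(π/ω₀³)(D_pp + ω₀²D_qq)(|k₀|² + ω₀²|η₀|²)), which forces ŵ(k₀,η₀) = 0 for all (k₀,η₀) ≠ (0,0). -/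
/-!
The characteristics are periodic with period `2π/ω₀`. Over one period `cos²` and `sin²` both
integrate to `π/ω₀` while `sin·cos` integrates to `0`, so the `D_pq` cross term drops out and the
dissipation accumulated along one loop is `(π/ω₀³)(D_pp + ω₀²D_qq)(|k₀|² + ω₀²|η₀|²)`, which is
positive off the origin. Going once around the loop thus gives `ŵ(k₀,η₀) = ŵ(k₀,η₀) e^{-t}` with
`t > 0`.
-/

open Real MeasureTheory

theorem integral_trigQuadratic_zero_two_pi (P Q R : ℝ) :
    ∫ u in (0 : ℝ)..2 * π, P * cos u ^ 2 + Q * sin u ^ 2 + R * (sin u * cos u)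
      = π * (P + Q) := by
  have hc : IntervalIntegrable (fun u => P * cos u ^ 2) volume 0 (2 * π) :=
    (by fun_prop : Continuous _).intervalIntegrable _ _
  have hs : IntervalIntegrable (fun u => Q * sin u ^ 2) volume 0 (2 * π) :=
    (by fun_prop : Continuous _).intervalIntegrable _ _
  have hsc : IntervalIntegrable (fun u => R * (sin u * cos u)) volume 0 (2 * π) :=
    (by fun_prop : Continuous _).intervalIntegrable _ _
  rw [intervalIntegral.integral_add (hc.add hs) hsc, intervalIntegral.integral_add hc hs]
  simp only [intervalIntegral.integral_const_mul, integral_cos_sq, integral_sin_sq,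
    integral_sin_mul_cos₁, sin_two_pi, cos_two_pi, sin_zero, cos_zero]
  ring

theorem integral_trigQuadratic_period {ω : ℝ} (hω : ω ≠ 0) (P Q R : ℝ) :
    ∫ τ in (0 : ℝ)..2 * π / ω,
        P * cos (ω * τ) ^ 2 + Q * sin (ω * τ) ^ 2 + R * (sin (ω * τ) * cos (ω * τ))
      = π / ω * (P + Q) := by
  rw [intervalIntegral.integral_comp_mul_left
      (fun u => P * cos u ^ 2 + Q * sin u ^ 2 + R * (sin u * cos u)) hω,
    mul_zero, mul_div_cancel₀ _ hω, integral_trigQuadratic_zero_two_pi, smul_eq_mul]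
  ring

theorem eq_zero_of_eq_mul_exp_neg {x t : ℝ} (ht : 0 < t) (h : x = x * exp (-t)) : x = 0 := by
  by_contra hx
  have : exp (-t) = 1 := (mul_right_eq_self₀.mp h.symm).resolve_right hx
  rw [exp_eq_one_iff] at this
  linarith

variable {E : Type*} [NormedAddCommGroup E]

theorem norm_sq_add_mul_norm_sq_pos {ω : ℝ} (hω : ω ≠ 0) {k η : E} (h : (k, η) ≠ 0) :
    0 < ‖k‖ ^ 2 + ω ^ 2 * ‖η‖ ^ 2 := by
  rcases eq_or_ne k 0 with rfl | hk
  · have hη : η ≠ 0 := fun hη => h (by simp [hη])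
    rw [norm_zero]
    positivity
  · have := norm_pos_iff.mpr hk
    positivity

variable [InnerProductSpace ℝ E]

/-- `(charK ω k₀ η₀ s, charη ω k₀ η₀ s)` is the characteristic `(k_s, η_s)` through `(k₀, η₀)`. -/
noncomputable def charK (ω : ℝ) (k₀ η₀ : E) (τ : ℝ) : E :=
  cos (ω * τ) • k₀ + (ω * sin (ω * τ)) • η₀

noncomputable def charη (ω : ℝ) (k₀ η₀ : E) (τ : ℝ) : E :=
  cos (ω * τ) • η₀ - (sin (ω * τ) / ω) • k₀

def dissipationRate (Dpp Dqq Dpq : ℝ) (k η : E) : ℝ :=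
  Dpp * ‖η‖ ^ 2 + Dqq * ‖k‖ ^ 2 + 2 * Dpq * inner ℝ k η

theorem charK_period {ω : ℝ} (hω : ω ≠ 0) (k₀ η₀ : E) : charK ω k₀ η₀ (2 * π / ω) = k₀ := by
  simp [charK, mul_div_cancel₀ _ hω]

theorem charη_period {ω : ℝ} (hω : ω ≠ 0) (k₀ η₀ : E) : charη ω k₀ η₀ (2 * π / ω) = η₀ := by
  simp [charη, mul_div_cancel₀ _ hω]

theorem norm_charK_sq (ω : ℝ) (k₀ η₀ : E) (τ : ℝ) :
    ‖charK ω k₀ η₀ τ‖ ^ 2 = ‖k₀‖ ^ 2 * cos (ω * τ) ^ 2 + ω ^ 2 * ‖η₀‖ ^ 2 * sin (ω * τ) ^ 2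
      + 2 * ω * inner ℝ k₀ η₀ * (sin (ω * τ) * cos (ω * τ)) := by
  rw [charK, norm_add_sq_real, norm_smul, norm_smul, real_inner_smul_left,
    real_inner_smul_right]
  simp only [norm_eq_abs, mul_pow, sq_abs]
  ring

theorem norm_charη_sq {ω : ℝ} (hω : ω ≠ 0) (k₀ η₀ : E) (τ : ℝ) :
    ‖charη ω k₀ η₀ τ‖ ^ 2 = ‖η₀‖ ^ 2 * cos (ω * τ) ^ 2 + ‖k₀‖ ^ 2 / ω ^ 2 * sin (ω * τ) ^ 2
      - 2 / ω * inner ℝ k₀ η₀ * (sin (ω * τ) * cos (ω * τ)) := by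
  rw [charη, norm_sub_sq_real, norm_smul, norm_smul, real_inner_smul_left,
    real_inner_smul_right, real_inner_comm k₀ η₀]
  simp only [norm_eq_abs, mul_pow, sq_abs, div_pow]
  field_simp
  ring

theorem inner_charK_charη {ω : ℝ} (hω : ω ≠ 0) (k₀ η₀ : E) (τ : ℝ) :
    inner ℝ (charK ω k₀ η₀ τ) (charη ω k₀ η₀ τ)
      = inner ℝ k₀ η₀ * cos (ω * τ) ^ 2 - inner ℝ k₀ η₀ * sin (ω * τ) ^ 2
        + (ω * ‖η₀‖ ^ 2 - ‖k₀‖ ^ 2 / ω) * (sin (ω * τ) * cos (ω * τ)) := by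
  simp only [charK, charη, inner_add_left, inner_sub_right, real_inner_smul_left,
    real_inner_smul_right, real_inner_self_eq_norm_sq, real_inner_comm k₀ η₀]
  field_simp
  ring

theorem integral_dissipationRate_period {ω : ℝ} (hω : ω ≠ 0) (Dpp Dqq Dpq : ℝ) (k₀ η₀ : E) :
    ∫ τ in (0 : ℝ)..2 * π / ω, dissipationRate Dpp Dqq Dpq (charK ω k₀ η₀ τ) (charη ω k₀ η₀ τ)
      = π / ω ^ 3 * (Dpp + ω ^ 2 * Dqq) * (‖k₀‖ ^ 2 + ω ^ 2 * ‖η₀‖ ^ 2) := by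
  have hform : ∀ τ, dissipationRate Dpp Dqq Dpq (charK ω k₀ η₀ τ) (charη ω k₀ η₀ τ)
      = (Dpp * ‖η₀‖ ^ 2 + Dqq * ‖k₀‖ ^ 2 + 2 * Dpq * inner ℝ k₀ η₀) * cos (ω * τ) ^ 2
        + (Dpp * ‖k₀‖ ^ 2 / ω ^ 2 + Dqq * ω ^ 2 * ‖η₀‖ ^ 2 - 2 * Dpq * inner ℝ k₀ η₀)
          * sin (ω * τ) ^ 2
        + (-2 * Dpp / ω * inner ℝ k₀ η₀ + 2 * Dqq * ω * inner ℝ k₀ η₀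
            + 2 * Dpq * (ω * ‖η₀‖ ^ 2 - ‖k₀‖ ^ 2 / ω)) * (sin (ω * τ) * cos (ω * τ)) := by
    intro τ
    rw [dissipationRate, norm_charK_sq, norm_charη_sq hω, inner_charK_charη hω]
    ring
  simp only [hform, integral_trigQuadratic_period hω]
  field_simp
  ring

theorem stmt_12_general (d : ℕ) (ω₀ Dpp Dqq Dpq : ℝ)
    (hω₀ : 0 < ω₀) (hpp : 0 < Dpp) (hqq : 0 < Dqq)
    (what : EuclideanSpace ℝ (Fin d) × EuclideanSpace ℝ (Fin d) → ℝ)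
    (hchar : ∀ (k₀ η₀ : EuclideanSpace ℝ (Fin d)) (s : ℝ),
      ∀ k η : ℝ → EuclideanSpace ℝ (Fin d),
        (k = fun τ => Real.cos (ω₀ * τ) • k₀ + (ω₀ * Real.sin (ω₀ * τ)) • η₀) →
        (η = fun τ => Real.cos (ω₀ * τ) • η₀ - (Real.sin (ω₀ * τ) / ω₀) • k₀) →
        what (k s, η s) = what (k₀, η₀) *
          Real.exp (-∫ τ in (0 : ℝ)..s,
            (Dpp * ‖η τ‖ ^ 2 + Dqq * ‖k τ‖ ^ 2 + 2 * Dpq * (inner ℝ (k τ) (η τ) : ℝ)))) :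
    ∀ k₀ η₀ : EuclideanSpace ℝ (Fin d),
      what (k₀, η₀) = what (k₀, η₀) *
        Real.exp (-(Real.pi / ω₀ ^ 3) * (Dpp + ω₀ ^ 2 * Dqq)
          * (‖k₀‖ ^ 2 + ω₀ ^ 2 * ‖η₀‖ ^ 2)) ∧
      ((k₀, η₀) ≠ (0 : EuclideanSpace ℝ (Fin d) × EuclideanSpace ℝ (Fin d)) →
        what (k₀, η₀) = 0) := by
  intro k₀ η₀
  have hω : ω₀ ≠ 0 := hω₀.ne'
  have hperiod := hchar k₀ η₀ (2 * π / ω₀) (charK ω₀ k₀ η₀) (charη ω₀ k₀ η₀) rfl rfl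
  have hint := integral_dissipationRate_period hω Dpp Dqq Dpq k₀ η₀
  simp only [dissipationRate] at hint
  rw [charK_period hω, charη_period hω, hint] at hperiod
  simp only [neg_mul]
  refine ⟨hperiod, fun hne => eq_zero_of_eq_mul_exp_neg ?_ hperiod⟩
  have := norm_sq_add_mul_norm_sq_pos hω hne
  positivity

/-- Frictionless case `γ = 0`, `ω₀ > 0`: if `ŵ` decays along the (periodic)
characteristics of the stationary Fourier-transformed QFP equation with
dissipation rate `ϑ`, then integrating over one period gives
`ŵ(k₀,η₀) = ŵ(k₀,η₀) exp(-(π/ω₀³)(D_pp + ω₀²D_qq)(|k₀|² + ω₀²|η₀|²))`,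
which forces `ŵ ≡ 0` away from the origin: no nontrivial steady state. -/
theorem stmt_12 (d : ℕ) (ω₀ Dpp Dqq Dpq : ℝ)
    (hω₀ : 0 < ω₀) (hpp : 0 < Dpp) (hqq : 0 < Dqq) (hpq : 0 ≤ Dpq)
    (hL : Dpq ^ 2 ≤ Dpp * Dqq)
    (what : EuclideanSpace ℝ (Fin d) × EuclideanSpace ℝ (Fin d) → ℝ)
    (hcont : Continuous what) (hnorm : what 0 = 1)
    (hchar : ∀ (k₀ η₀ : EuclideanSpace ℝ (Fin d)) (s : ℝ),
      ∀ k η : ℝ → EuclideanSpace ℝ (Fin d),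
        (k = fun τ => Real.cos (ω₀ * τ) • k₀ + (ω₀ * Real.sin (ω₀ * τ)) • η₀) →
        (η = fun τ => Real.cos (ω₀ * τ) • η₀ - (Real.sin (ω₀ * τ) / ω₀) • k₀) →
        what (k s, η s) = what (k₀, η₀) *
          Real.exp (-∫ τ in (0 : ℝ)..s,
            (Dpp * ‖η τ‖ ^ 2 + Dqq * ‖k τ‖ ^ 2 + 2 * Dpq * (inner ℝ (k τ) (η τ) : ℝ)))) :
    ∀ k₀ η₀ : EuclideanSpace ℝ (Fin d),
      what (k₀, η₀) = what (k₀, η₀) *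
        Real.exp (-(Real.pi / ω₀ ^ 3) * (Dpp + ω₀ ^ 2 * Dqq)
          * (‖k₀‖ ^ 2 + ω₀ ^ 2 * ‖η₀‖ ^ 2)) ∧
      ((k₀, η₀) ≠ (0 : EuclideanSpace ℝ (Fin d) × EuclideanSpace ℝ (Fin d)) →
        what (k₀, η₀) = 0) :=
  stmt_12_general d ω₀ Dpp Dqq Dpq hω₀ hpp hqq what hchar
end

section
/- If x exp(-c x) = x for some real x and c > 0 with x representing ŵ(0,η₀) and the relation ŵ(0,η₀) = ŵ(0,η₀)exp(-D_pp|η₀|²s) holds for all s ∈ ℝ and all η₀ ∈ ℝ^d with D_pp > 0, then ŵ(0,η₀) = 0 for all η₀ ≠ 0; hence no nontrivial L¹ steady state of the free (ω₀ = γ = 0) QFP equation exists, since it would require ŵ(0,0) = 1 together with continuity of ŵ at 0. -/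
/-! Since `D_pp ‖η₀‖² > 0` for `η₀ ≠ 0`, the factor `exp (-D_pp ‖η₀‖² s)` differs from `1`
for `s ≠ 0`, which forces `ŵ(0, η₀) = 0`. As `0` is not isolated in `ℝᵈ` for `d > 0`,
continuity then gives `ŵ(0, 0) = 0 ≠ 1`. -/

open Topology

theorem Real.eq_zero_of_eq_mul_exp {a x : ℝ} (hx : x ≠ 0) (h : a = a * Real.exp x) : a = 0 := by
  by_contra ha
  exact hx ((Real.exp_eq_one_iff x).1 ((mul_eq_left₀ ha).1 h.symm))

theorem ContinuousAt.eq_of_forall_ne {X Y : Type*} [TopologicalSpace X] [TopologicalSpace Y]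
    [T2Space Y] {f : X → Y} {x : X} [(𝓝[≠] x).NeBot] {y : Y} (hf : ContinuousAt f x)
    (h : ∀ z ≠ x, f z = y) : f x = y :=
  tendsto_nhds_unique (hf.tendsto.mono_left nhdsWithin_le_nhds)
    (tendsto_const_nhds.congr'
      (eventually_nhdsWithin_of_forall (s := {x}ᶜ) fun z hz => (h z hz).symm))

/-- Free case `ω₀ = γ = 0`: if `ŵ(0,η₀) = ŵ(0,η₀) exp(-D_pp|η₀|² s)` for all
`s ∈ ℝ` and all `η₀`, with `D_pp > 0`, then `ŵ(0,η₀) = 0` for every `η₀ ≠ 0`;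
hence a continuous `ŵ` (e.g. the Fourier transform of an L¹ steady state)
cannot satisfy the normalization `ŵ(0,0) = 1`: no nontrivial steady state. -/
theorem stmt_13 (d : ℕ) (hd : 0 < d) (Dpp : ℝ) (hpp : 0 < Dpp)
    (what : EuclideanSpace ℝ (Fin d) × EuclideanSpace ℝ (Fin d) → ℝ)
    (hrel : ∀ (η₀ : EuclideanSpace ℝ (Fin d)) (s : ℝ),
      what (0, η₀) = what (0, η₀) * Real.exp (-(Dpp * ‖η₀‖ ^ 2 * s))) :
    (∀ η₀ : EuclideanSpace ℝ (Fin d), η₀ ≠ 0 → what (0, η₀) = 0) ∧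
      (Continuous what → what 0 ≠ 1) := by
  have hzero : ∀ η₀ : EuclideanSpace ℝ (Fin d), η₀ ≠ 0 → what (0, η₀) = 0 := by
    intro η₀ hη₀
    have hpos : 0 < Dpp * ‖η₀‖ ^ 2 * 1 := by positivity
    exact Real.eq_zero_of_eq_mul_exp (neg_ne_zero.2 hpos.ne') (hrel η₀ 1)
  refine ⟨hzero, fun hcont hone => ?_⟩
  have : Nonempty (Fin d) := ⟨⟨0, hd⟩⟩
  have hslice : ContinuousAt (fun η₀ => what (0, η₀)) 0 :=
    (hcont.comp (Continuous.prodMk_right 0)).continuousAt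
  have h00 : what (0, 0) = 0 := hslice.eq_of_forall_ne hzero
  exact one_ne_zero (hone.symm.trans h00)
end
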